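/- Let γ > 1, N ≥ 1, Δx > 0 and r ∈ ℝ. For j ∈ ℤ/Nℤ let W_j : ℝ → ℝ⁵ be differentiable curves of primitive states (pointwise ρ_j > 0, p_j > 0, |u_j|² < 1) and E_j, B_j : ℝ → ℝ³ arbitrary functions. Suppose the conservative variables satisfy, for all t and j, the semi-discrete scheme d/dt U(W_j(t)) = −(F̃^x(W_j(t), W_{j+1}(t)) − F̃^x(W_{j−1}(t), W_j(t)))/Δx + s(W_j(t), E_j(t), B_j(t)), where F̃^x is the entropy conservative numerical flux (logarithmic means extended by a^ln = a when the two values coincide) and s is the Lorentz-force source. Then the semi-discrete entropy equality d/dt 𝒰(W_j(t)) + (ℱ̃_{j+1/2}(t) − ℱ̃_{j−1/2}(t))/Δx = 0 holds for all t and j, where ℱ̃_{j+1/2} = ((V(W_j) + V(W_{j+1}))/2) · F̃^x(W_j, W_{j+1}) − (ψ^x(W_j) + ψ^x(W_{j+1}))/2, with entropy potential ψ^x = ρΓu_x; that is, the scheme with the entropy conservative flux is entropy conservative and the source terms do not affect the entropy evolution. -/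

import Mathlib

set_option maxHeartbeats 2000000


noncomputable section

/-- Dot product on ℝ⁵. -/
def dot5 (a b : Fin 5 → ℝ) : ℝ :=
  a 0 * b 0 + a 1 * b 1 + a 2 * b 2 + a 3 * b 3 + a 4 * b 4

/-- Lorentz factor of a primitive state `W = (ρ, u_x, u_y, u_z, p)`. -/
def Gm (W : Fin 5 → ℝ) : ℝ := 1 / Real.sqrt (1 - (W 1 ^ 2 + W 2 ^ 2 + W 3 ^ 2))

/-- Specific enthalpy. -/
def enth (γ : ℝ) (W : Fin 5 → ℝ) : ℝ := 1 + γ / (γ - 1) * (W 4 / W 0)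

/-- Conservative variables `U(W) = (ρΓ, ρhΓ²u_x, ρhΓ²u_y, ρhΓ²u_z, ρhΓ² − p)`. -/
def Umap (γ : ℝ) (W : Fin 5 → ℝ) : Fin 5 → ℝ :=
  ![W 0 * Gm W,
    W 0 * enth γ W * Gm W ^ 2 * W 1,
    W 0 * enth γ W * Gm W ^ 2 * W 2,
    W 0 * enth γ W * Gm W ^ 2 * W 3,
    W 0 * enth γ W * Gm W ^ 2 - W 4]

/-- The entropy function `𝒰 = −ρΓs/(γ−1)` with `s = ln(p ρ^{−γ})`. -/
def entU (γ : ℝ) (W : Fin 5 → ℝ) : ℝ :=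
  -(W 0 * Gm W * Real.log (W 4 * W 0 ^ (-γ))) / (γ - 1)

/-- The entropy variables `V(W)`. -/
def entV (γ : ℝ) (W : Fin 5 → ℝ) : Fin 5 → ℝ :=
  ![(γ - Real.log (W 4 * W 0 ^ (-γ))) / (γ - 1) + W 0 / W 4,
    W 1 * Gm W * (W 0 / W 4),
    W 2 * Gm W * (W 0 / W 4),
    W 3 * Gm W * (W 0 / W 4),
    -(Gm W * (W 0 / W 4))]

/-- The Lorentz-force source `s(W, E, B)`. -/
def src (r : ℝ) (W : Fin 5 → ℝ) (E B : Fin 3 → ℝ) : Fin 5 → ℝ :=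
  ![0,
    r * W 0 * Gm W * (E 0 + (W 2 * B 2 - W 3 * B 1)),
    r * W 0 * Gm W * (E 1 + (W 3 * B 0 - W 1 * B 2)),
    r * W 0 * Gm W * (E 2 + (W 1 * B 1 - W 2 * B 0)),
    r * W 0 * Gm W * (W 1 * E 0 + W 2 * E 1 + W 3 * E 2)]

/-- Logarithmic mean, extended by `a^ln = a` when the two values coincide. -/
def logMean (a b : ℝ) : ℝ :=
  if a = b then a else (b - a) / (Real.log b - Real.log a)

/-- The entropy conservative numerical flux `F̃^x(W_L, W_R)`. -/
def Ffl (γ : ℝ) (WL WR : Fin 5 → ℝ) : Fin 5 → ℝ :=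
  let ΓL := Gm WL
  let ΓR := Gm WR
  let mxb := (ΓL * WL 1 + ΓR * WR 1) / 2
  let myb := (ΓL * WL 2 + ΓR * WR 2) / 2
  let mzb := (ΓL * WL 3 + ΓR * WR 3) / 2
  let Γb := (ΓL + ΓR) / 2
  let ρb := (WL 0 + WR 0) / 2
  let βb := (WL 0 / WL 4 + WR 0 / WR 4) / 2
  let ρln := logMean (WL 0) (WR 0)
  let βln := logMean (WL 0 / WL 4) (WR 0 / WR 4)
  let kcoef := 1 / ((γ - 1) * βln) + 1
  let F5 := -Γb * (kcoef * ρln * mxb + mxb * ρb / βb)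
    / (mxb ^ 2 + myb ^ 2 + mzb ^ 2 - Γb ^ 2)
  ![ρln * mxb, mxb * F5 / Γb + ρb / βb, myb * F5 / Γb, mzb * F5 / Γb, F5]

/-- The entropy potential `ψ^x = ρΓu_x`. -/
def psiX (W : Fin 5 → ℝ) : ℝ := W 0 * Gm W * W 1

/-- The numerical entropy flux
`ℱ̃ = ((V(W_L)+V(W_R))/2) · F̃^x(W_L, W_R) − (ψ^x(W_L)+ψ^x(W_R))/2`. -/
def numEntFlux (γ : ℝ) (WL WR : Fin 5 → ℝ) : ℝ :=
  dot5 (fun i => (entV γ WL i + entV γ WR i) / 2) (Ffl γ WL WR)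
    - (psiX WL + psiX WR) / 2

lemma logMean_mul (a b : ℝ) (ha : 0 < a) (hb : 0 < b) :
    logMean a b * (Real.log b - Real.log a) = b - a := by
  unfold logMean; split_ifs with h
  · simp [h]
  · have hne : Real.log b - Real.log a ≠ 0 := fun hlog =>
      h (Real.log_injOn_pos (Set.mem_Ioi.2 ha) (Set.mem_Ioi.2 hb) (by linarith))
    field_simp
lemma logMean_pos (a b : ℝ) (ha : 0 < a) (hb : 0 < b) : 0 < logMean a b := by
  unfold logMean; split_ifs with h
  · exact ha
  · rcases lt_or_gt_of_ne h with hlt | hlt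
    · have : Real.log a < Real.log b := Real.log_lt_log ha hlt
      exact div_pos (by linarith) (by linarith)
    · have : Real.log b < Real.log a := Real.log_lt_log hb hlt
      exact div_pos_of_neg_of_neg (by linarith) (by linarith)
lemma gm_pos (W : Fin 5 → ℝ) (hu : W 1 ^ 2 + W 2 ^ 2 + W 3 ^ 2 < 1) : 0 < Gm W :=
  div_pos one_pos (Real.sqrt_pos.2 (by linarith))
lemma gm_sq (W : Fin 5 → ℝ) (hu : W 1 ^ 2 + W 2 ^ 2 + W 3 ^ 2 < 1) :
    Gm W ^ 2 * (1 - (W 1 ^ 2 + W 2 ^ 2 + W 3 ^ 2)) = 1 := by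
  have h1 : (0:ℝ) < 1 - (W 1 ^ 2 + W 2 ^ 2 + W 3 ^ 2) := by linarith
  have h2 := Real.sq_sqrt h1.le
  have h3 := Real.sqrt_pos.2 h1
  rw [Gm, div_pow, one_pow, h2]
  field_simp

lemma chain_alg (γ ρ p u1 u2 u3 d0 d1 d2 d3 d4 g L : ℝ)
    (hγ : γ - 1 ≠ 0) (hp : p ≠ 0)
    (hg : g ^ 2 * (1 - (u1 ^ 2 + u2 ^ 2 + u3 ^ 2)) = 1) :
    ((γ - L) / (γ - 1) + ρ / p) * (d0 * g + ρ * g ^ 3 * (u1 * d1 + u2 * d2 + u3 * d3))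
    + u1 * g * (ρ / p) * ((d0 + γ / (γ - 1) * d4) * g ^ 2 * u1
        + 2 * (ρ + γ / (γ - 1) * p) * g ^ 4 * (u1 * d1 + u2 * d2 + u3 * d3) * u1
        + (ρ + γ / (γ - 1) * p) * g ^ 2 * d1)
    + u2 * g * (ρ / p) * ((d0 + γ / (γ - 1) * d4) * g ^ 2 * u2
        + 2 * (ρ + γ / (γ - 1) * p) * g ^ 4 * (u1 * d1 + u2 * d2 + u3 * d3) * u2
        + (ρ + γ / (γ - 1) * p) * g ^ 2 * d2)
    + u3 * g * (ρ / p) * ((d0 + γ / (γ - 1) * d4) * g ^ 2 * u3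
        + 2 * (ρ + γ / (γ - 1) * p) * g ^ 4 * (u1 * d1 + u2 * d2 + u3 * d3) * u3
        + (ρ + γ / (γ - 1) * p) * g ^ 2 * d3)
    + (-(g * (ρ / p))) * ((d0 + γ / (γ - 1) * d4) * g ^ 2
        + 2 * (ρ + γ / (γ - 1) * p) * g ^ 4 * (u1 * d1 + u2 * d2 + u3 * d3) - d4)
    = -((d0 * g * L + ρ * g ^ 3 * (u1 * d1 + u2 * d2 + u3 * d3) * L) / (γ - 1))
      - g * (ρ * d4 / p - γ * d0) / (γ - 1) := by
  have hw : (γ - 1) * (γ - 1)⁻¹ = 1 := mul_inv_cancel₀ hγ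
  have hv : p * p⁻¹ = 1 := mul_inv_cancel₀ hp
  linear_combination
    (-(g * ρ * p⁻¹ * ((d0 + γ * (γ - 1)⁻¹ * d4)
        + 2 * (ρ + γ * (γ - 1)⁻¹ * p) * g ^ 2 * (u1 * d1 + u2 * d2 + u3 * d3)))) * hg
    + (-(g * ρ * p⁻¹ * d4)) * hw
    + (-(γ * (γ - 1)⁻¹ * ρ * g ^ 3 * (u1 * d1 + u2 * d2 + u3 * d3))) * hv

lemma deriv_entU_eq (γ : ℝ) (hγ : 1 < γ) (W : ℝ → Fin 5 → ℝ)
    (hρ : ∀ τ, 0 < W τ 0) (hp : ∀ τ, 0 < W τ 4)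
    (hu : ∀ τ, W τ 1 ^ 2 + W τ 2 ^ 2 + W τ 3 ^ 2 < 1)
    (hdiff : Differentiable ℝ W) (t : ℝ) :
    deriv (fun τ => entU γ (W τ)) t
      = dot5 (entV γ (W t)) (deriv (fun τ => Umap γ (W τ)) t) := by
  have hγ1 : γ - 1 ≠ 0 := sub_ne_zero.2 (ne_of_gt hγ)
  have hρ0 : W t 0 ≠ 0 := (hρ t).ne'
  have hp0 : W t 4 ≠ 0 := (hp t).ne'
  set d : Fin 5 → ℝ := deriv W t with hddef
  have hW : ∀ i, HasDerivAt (fun τ => W τ i) (d i) t :=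
    fun i => hasDerivAt_pi.1 (hdiff t).hasDerivAt i
  have hqpos : 0 < 1 - (W t 1 ^ 2 + W t 2 ^ 2 + W t 3 ^ 2) := by have := hu t; linarith
  have hstpos : 0 < Real.sqrt (1 - (W t 1 ^ 2 + W t 2 ^ 2 + W t 3 ^ 2)) := Real.sqrt_pos.2 hqpos
  have hst2 := Real.sq_sqrt hqpos.le
  have hq : HasDerivAt (fun τ => 1 - (W τ 1 ^ 2 + W τ 2 ^ 2 + W τ 3 ^ 2))
      (-(2 * W t 1 * d 1 + 2 * W t 2 * d 2 + 2 * W t 3 * d 3)) t := by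
    have h := ((((hW 1).pow 2).add ((hW 2).pow 2)).add ((hW 3).pow 2)).const_sub 1
    refine h.congr_deriv (Eq.symm ?_)
    push_cast
    ring
  have hsq : HasDerivAt (fun τ => Real.sqrt (1 - (W τ 1 ^ 2 + W τ 2 ^ 2 + W τ 3 ^ 2)))
      ((-(2 * W t 1 * d 1 + 2 * W t 2 * d 2 + 2 * W t 3 * d 3))
        / (2 * Real.sqrt (1 - (W t 1 ^ 2 + W t 2 ^ 2 + W t 3 ^ 2)))) t :=
    hq.sqrt (ne_of_gt hqpos)
  have hG : HasDerivAt (fun τ => Gm (W τ))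
      ((W t 1 * d 1 + W t 2 * d 2 + W t 3 * d 3) * Gm (W t) ^ 3) t := by
    have heq : (fun τ => Gm (W τ))
        = fun τ => (Real.sqrt (1 - (W τ 1 ^ 2 + W τ 2 ^ 2 + W τ 3 ^ 2)))⁻¹ := by
      funext τ; rw [Gm, one_div]
    rw [heq]
    have h2 := hsq.inv (ne_of_gt hstpos)
    refine h2.congr_deriv (Eq.symm ?_)
    rw [Gm, one_div]
    field_simp
  have hh : HasDerivAt (fun τ => enth γ (W τ))
      (γ / (γ - 1) * ((d 4 * W t 0 - W t 4 * d 0) / W t 0 ^ 2)) t := by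
    have h := (((hW 4).div (hW 0) hρ0).const_mul (γ / (γ - 1))).const_add 1
    exact h
  have hρh : HasDerivAt (fun τ => W τ 0 * enth γ (W τ)) (d 0 + γ / (γ - 1) * d 4) t := by
    have h := (hW 0).mul hh
    refine h.congr_deriv (Eq.symm ?_)
    rw [enth]
    field_simp
    ring
  have hU0 : HasDerivAt (fun τ => W τ 0 * Gm (W τ))
      (d 0 * Gm (W t) + W t 0 * Gm (W t) ^ 3 * (W t 1 * d 1 + W t 2 * d 2 + W t 3 * d 3)) t := by
    have h := (hW 0).mul hG
    refine h.congr_deriv (Eq.symm ?_)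
    ring
  have hU1 : HasDerivAt (fun τ => W τ 0 * enth γ (W τ) * Gm (W τ) ^ 2 * W τ 1)
      ((d 0 + γ / (γ - 1) * d 4) * Gm (W t) ^ 2 * W t 1
        + 2 * (W t 0 + γ / (γ - 1) * W t 4) * Gm (W t) ^ 4
          * (W t 1 * d 1 + W t 2 * d 2 + W t 3 * d 3) * W t 1
        + (W t 0 + γ / (γ - 1) * W t 4) * Gm (W t) ^ 2 * d 1) t := by
    have h := (hρh.mul (hG.pow 2)).mul (hW 1)
    refine h.congr_deriv (Eq.symm ?_)
    simp only [Pi.mul_apply, Pi.pow_apply, Pi.sub_apply]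
    rw [enth]
    push_cast
    field_simp
  have hU2 : HasDerivAt (fun τ => W τ 0 * enth γ (W τ) * Gm (W τ) ^ 2 * W τ 2)
      ((d 0 + γ / (γ - 1) * d 4) * Gm (W t) ^ 2 * W t 2
        + 2 * (W t 0 + γ / (γ - 1) * W t 4) * Gm (W t) ^ 4
          * (W t 1 * d 1 + W t 2 * d 2 + W t 3 * d 3) * W t 2
        + (W t 0 + γ / (γ - 1) * W t 4) * Gm (W t) ^ 2 * d 2) t := by
    have h := (hρh.mul (hG.pow 2)).mul (hW 2)
    refine h.congr_deriv (Eq.symm ?_)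
    simp only [Pi.mul_apply, Pi.pow_apply, Pi.sub_apply]
    rw [enth]
    push_cast
    field_simp
  have hU3 : HasDerivAt (fun τ => W τ 0 * enth γ (W τ) * Gm (W τ) ^ 2 * W τ 3)
      ((d 0 + γ / (γ - 1) * d 4) * Gm (W t) ^ 2 * W t 3
        + 2 * (W t 0 + γ / (γ - 1) * W t 4) * Gm (W t) ^ 4
          * (W t 1 * d 1 + W t 2 * d 2 + W t 3 * d 3) * W t 3
        + (W t 0 + γ / (γ - 1) * W t 4) * Gm (W t) ^ 2 * d 3) t := by
    have h := (hρh.mul (hG.pow 2)).mul (hW 3)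
    refine h.congr_deriv (Eq.symm ?_)
    simp only [Pi.mul_apply, Pi.pow_apply, Pi.sub_apply]
    rw [enth]
    push_cast
    field_simp
  have hU4 : HasDerivAt (fun τ => W τ 0 * enth γ (W τ) * Gm (W τ) ^ 2 - W τ 4)
      ((d 0 + γ / (γ - 1) * d 4) * Gm (W t) ^ 2
        + 2 * (W t 0 + γ / (γ - 1) * W t 4) * Gm (W t) ^ 4
          * (W t 1 * d 1 + W t 2 * d 2 + W t 3 * d 3) - d 4) t := by
    have h := (hρh.mul (hG.pow 2)).sub (hW 4)
    refine h.congr_deriv (Eq.symm ?_)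
    simp only [Pi.mul_apply, Pi.pow_apply, Pi.sub_apply]
    rw [enth]
    push_cast
    field_simp
  have hUvec : HasDerivAt (fun τ => Umap γ (W τ))
      (![d 0 * Gm (W t) + W t 0 * Gm (W t) ^ 3 * (W t 1 * d 1 + W t 2 * d 2 + W t 3 * d 3),
        (d 0 + γ / (γ - 1) * d 4) * Gm (W t) ^ 2 * W t 1
          + 2 * (W t 0 + γ / (γ - 1) * W t 4) * Gm (W t) ^ 4
            * (W t 1 * d 1 + W t 2 * d 2 + W t 3 * d 3) * W t 1
          + (W t 0 + γ / (γ - 1) * W t 4) * Gm (W t) ^ 2 * d 1,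
        (d 0 + γ / (γ - 1) * d 4) * Gm (W t) ^ 2 * W t 2
          + 2 * (W t 0 + γ / (γ - 1) * W t 4) * Gm (W t) ^ 4
            * (W t 1 * d 1 + W t 2 * d 2 + W t 3 * d 3) * W t 2
          + (W t 0 + γ / (γ - 1) * W t 4) * Gm (W t) ^ 2 * d 2,
        (d 0 + γ / (γ - 1) * d 4) * Gm (W t) ^ 2 * W t 3
          + 2 * (W t 0 + γ / (γ - 1) * W t 4) * Gm (W t) ^ 4
            * (W t 1 * d 1 + W t 2 * d 2 + W t 3 * d 3) * W t 3
          + (W t 0 + γ / (γ - 1) * W t 4) * Gm (W t) ^ 2 * d 3,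
        (d 0 + γ / (γ - 1) * d 4) * Gm (W t) ^ 2
          + 2 * (W t 0 + γ / (γ - 1) * W t 4) * Gm (W t) ^ 4
            * (W t 1 * d 1 + W t 2 * d 2 + W t 3 * d 3) - d 4]) t := by
    apply hasDerivAt_pi.2
    intro i
    fin_cases i <;>
      simp only [Umap, Matrix.cons_val_zero, Matrix.cons_val_one, Matrix.head_cons,
        Matrix.cons_val_two, Matrix.tail_cons, Matrix.cons_val_three, Matrix.cons_val_four,
        Fin.isValue]
    · exact hU0
    · exact hU1
    · exact hU2
    · exact hU3
    · exact hU4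
  have hfun : (fun τ => entU γ (W τ))
      = fun τ => -(W τ 0 * Gm (W τ) * (Real.log (W τ 4) - γ * Real.log (W τ 0))) / (γ - 1) := by
    funext τ
    rw [entU, Real.log_mul (hp τ).ne' (Real.rpow_pos_of_pos (hρ τ) (-γ)).ne',
      Real.log_rpow (hρ τ)]
    ring_nf
  have hE : HasDerivAt (fun τ => entU γ (W τ))
      (-((d 0 * Gm (W t) * (Real.log (W t 4) - γ * Real.log (W t 0))
          + W t 0 * Gm (W t) ^ 3 * (W t 1 * d 1 + W t 2 * d 2 + W t 3 * d 3)
            * (Real.log (W t 4) - γ * Real.log (W t 0))) / (γ - 1))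
        - Gm (W t) * (W t 0 * d 4 / W t 4 - γ * d 0) / (γ - 1)) t := by
    rw [hfun]
    have h := (((hW 0).mul hG).mul
      (((hW 4).log hp0).sub (((hW 0).log hρ0).const_mul γ))).neg.div_const (γ - 1)
    refine h.congr_deriv (Eq.symm ?_)
    simp only [Pi.mul_apply, Pi.pow_apply, Pi.sub_apply]
    field_simp
    ring
  rw [hE.deriv, hUvec.deriv]
  have hsLog : Real.log (W t 4 * W t 0 ^ (-γ)) = Real.log (W t 4) - γ * Real.log (W t 0) := by
    rw [Real.log_mul hp0 (Real.rpow_pos_of_pos (hρ t) (-γ)).ne', Real.log_rpow (hρ t)]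
    ring
  simp only [dot5, entV, Matrix.cons_val_zero, Matrix.cons_val_one, Matrix.head_cons,
    Matrix.cons_val_two, Matrix.tail_cons, Matrix.cons_val_three, Matrix.cons_val_four,
    Fin.isValue]
  rw [hsLog]
  linear_combination (-1 : ℝ) * chain_alg γ (W t 0) (W t 4) (W t 1) (W t 2) (W t 3)
    (d 0) (d 1) (d 2) (d 3) (d 4) (Gm (W t))
    (Real.log (W t 4) - γ * Real.log (W t 0)) hγ1 hp0 (gm_sq (W t) (hu t))


lemma C0_alg (γ rL rR bL bR a1 a2 a3 b1 b2 b3 ΓL ΓR LrL LrR LbL LbR rln bln F5 rbb kk : ℝ)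
    (hγ : γ - 1 ≠ 0)
    (hΓL : ΓL ^ 2 * (1 - (a1 ^ 2 + a2 ^ 2 + a3 ^ 2)) = 1)
    (hΓR : ΓR ^ 2 * (1 - (b1 ^ 2 + b2 ^ 2 + b3 ^ 2)) = 1)
    (hGb : (ΓL + ΓR) / 2 ≠ 0)
    (hrln : rln * (LrR - LrL) = rR - rL)
    (hbln : bln * (LbR - LbL) = bR - bL)
    (hrbb : rbb * ((bL + bR) / 2) = (rL + rR) / 2)
    (hk : kk * ((γ - 1) * bln) = 1 + (γ - 1) * bln)
    (hF5 : F5 * (((ΓL * a1 + ΓR * b1) / 2) ^ 2 + ((ΓL * a2 + ΓR * b2) / 2) ^ 2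
          + ((ΓL * a3 + ΓR * b3) / 2) ^ 2 - ((ΓL + ΓR) / 2) ^ 2)
        = -((ΓL + ΓR) / 2) * (kk * rln * ((ΓL * a1 + ΓR * b1) / 2)
          + ((ΓL * a1 + ΓR * b1) / 2) * rbb)) :
    ((γ - (-LbR - (γ - 1) * LrR)) / (γ - 1) + bR
      - ((γ - (-LbL - (γ - 1) * LrL)) / (γ - 1) + bL)) * (rln * ((ΓL * a1 + ΓR * b1) / 2))
    + (b1 * ΓR * bR - a1 * ΓL * bL) * (((ΓL * a1 + ΓR * b1) / 2) * F5 / ((ΓL + ΓR) / 2) + rbb)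
    + (b2 * ΓR * bR - a2 * ΓL * bL) * (((ΓL * a2 + ΓR * b2) / 2) * F5 / ((ΓL + ΓR) / 2))
    + (b3 * ΓR * bR - a3 * ΓL * bL) * (((ΓL * a3 + ΓR * b3) / 2) * F5 / ((ΓL + ΓR) / 2))
    + (-(ΓR * bR) - -(ΓL * bL)) * F5
    = rR * ΓR * b1 - rL * ΓL * a1 := by
  have hiG : ((ΓL + ΓR) / 2) * ((ΓL + ΓR) / 2)⁻¹ = 1 := mul_inv_cancel₀ hGb
  have hw : (γ - 1) * (γ - 1)⁻¹ = 1 := mul_inv_cancel₀ hγ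
  linear_combination
    (F5 * ((ΓL + ΓR) / 2)⁻¹ * (bL + bR) / 4) * hΓL
    + (-(F5 * ((ΓL + ΓR) / 2)⁻¹ * (bL + bR) / 4)) * hΓR
    + ((ΓR * bR - ΓL * bL) * F5
        - (bR - bL) * (kk * rln * ((ΓL * a1 + ΓR * b1) / 2)
          + ((ΓL * a1 + ΓR * b1) / 2) * rbb)) * hiG
    + ((bR - bL) * ((ΓL + ΓR) / 2)⁻¹) * hF5
    + ((LrR - LrL) * rln * ((ΓL * a1 + ΓR * b1) / 2)
        + (LbR - LbL) * rln * ((ΓL * a1 + ΓR * b1) / 2) * (kk - 1) * bln) * hw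
    + ((ΓL * a1 + ΓR * b1) / 2) * hrln
    + (-((LbR - LbL) * rln * ((ΓL * a1 + ΓR * b1) / 2) * (γ - 1)⁻¹)) * hk
    + ((kk - 1) * rln * ((ΓL * a1 + ΓR * b1) / 2)) * hbln
    + (ΓR * b1 - ΓL * a1) * hrbb

lemma flux_main (γ : ℝ) (hγ : 1 < γ) (WL WR : Fin 5 → ℝ)
    (hρL : 0 < WL 0) (hpL : 0 < WL 4) (huL : WL 1 ^ 2 + WL 2 ^ 2 + WL 3 ^ 2 < 1)
    (hρR : 0 < WR 0) (hpR : 0 < WR 4) (huR : WR 1 ^ 2 + WR 2 ^ 2 + WR 3 ^ 2 < 1) :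
    dot5 (fun i => entV γ WR i - entV γ WL i) (Ffl γ WL WR) = psiX WR - psiX WL := by
  have hγ1 : γ - 1 ≠ 0 := sub_ne_zero.2 (ne_of_gt hγ)
  have hΓLpos := gm_pos WL huL
  have hΓRpos := gm_pos WR huR
  have hΓL := gm_sq WL huL
  have hΓR := gm_sq WR huR
  have hGb : (Gm WL + Gm WR) / 2 ≠ 0 := ne_of_gt (by linarith)
  have hbL : 0 < WL 0 / WL 4 := div_pos hρL hpL
  have hbR : 0 < WR 0 / WR 4 := div_pos hρR hpR
  have hrln := logMean_mul (WL 0) (WR 0) hρL hρR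
  have hbln := logMean_mul (WL 0 / WL 4) (WR 0 / WR 4) hbL hbR
  have hblnpos := logMean_pos (WL 0 / WL 4) (WR 0 / WR 4) hbL hbR
  have hbbne : (WL 0 / WL 4 + WR 0 / WR 4) / 2 ≠ 0 := ne_of_gt (by linarith)
  have hrbb : ((WL 0 + WR 0) / 2 / ((WL 0 / WL 4 + WR 0 / WR 4) / 2))
      * ((WL 0 / WL 4 + WR 0 / WR 4) / 2) = (WL 0 + WR 0) / 2 :=
    div_mul_cancel₀ _ hbbne
  have hk : (1 / ((γ - 1) * logMean (WL 0 / WL 4) (WR 0 / WR 4)) + 1)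
      * ((γ - 1) * logMean (WL 0 / WL 4) (WR 0 / WR 4))
      = 1 + (γ - 1) * logMean (WL 0 / WL 4) (WR 0 / WR 4) := by
    field_simp
  -- D ≤ -1
  have hmm : (Gm WL * WL 1) * (Gm WR * WR 1) + (Gm WL * WL 2) * (Gm WR * WR 2)
      + (Gm WL * WL 3) * (Gm WR * WR 3) ≤ Gm WL * Gm WR - 1 := by
    nlinarith [hΓL, hΓR, sq_nonneg (Gm WL - Gm WR), mul_pos hΓLpos hΓRpos,
      sq_nonneg (Gm WL * WL 1 * Gm WR - Gm WR * WR 1 * Gm WL),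
      sq_nonneg (Gm WL * WL 2 * Gm WR - Gm WR * WR 2 * Gm WL),
      sq_nonneg (Gm WL * WL 3 * Gm WR - Gm WR * WR 3 * Gm WL)]
  have hDlt : ((Gm WL * WL 1 + Gm WR * WR 1) / 2) ^ 2 + ((Gm WL * WL 2 + Gm WR * WR 2) / 2) ^ 2
      + ((Gm WL * WL 3 + Gm WR * WR 3) / 2) ^ 2 - ((Gm WL + Gm WR) / 2) ^ 2 < 0 := by
    nlinarith [hmm, hΓL, hΓR]
  have hDne : ((Gm WL * WL 1 + Gm WR * WR 1) / 2) ^ 2 + ((Gm WL * WL 2 + Gm WR * WR 2) / 2) ^ 2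
      + ((Gm WL * WL 3 + Gm WR * WR 3) / 2) ^ 2 - ((Gm WL + Gm WR) / 2) ^ 2 ≠ 0 := ne_of_lt hDlt
  have hF5 : -((Gm WL + Gm WR) / 2) * ((1 / ((γ - 1) * logMean (WL 0 / WL 4) (WR 0 / WR 4)) + 1)
        * logMean (WL 0) (WR 0) * ((Gm WL * WL 1 + Gm WR * WR 1) / 2)
        + ((Gm WL * WL 1 + Gm WR * WR 1) / 2) * ((WL 0 + WR 0) / 2
          / ((WL 0 / WL 4 + WR 0 / WR 4) / 2)))
      / (((Gm WL * WL 1 + Gm WR * WR 1) / 2) ^ 2 + ((Gm WL * WL 2 + Gm WR * WR 2) / 2) ^ 2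
        + ((Gm WL * WL 3 + Gm WR * WR 3) / 2) ^ 2 - ((Gm WL + Gm WR) / 2) ^ 2)
      * (((Gm WL * WL 1 + Gm WR * WR 1) / 2) ^ 2 + ((Gm WL * WL 2 + Gm WR * WR 2) / 2) ^ 2
        + ((Gm WL * WL 3 + Gm WR * WR 3) / 2) ^ 2 - ((Gm WL + Gm WR) / 2) ^ 2)
      = -((Gm WL + Gm WR) / 2) * ((1 / ((γ - 1) * logMean (WL 0 / WL 4) (WR 0 / WR 4)) + 1)
        * logMean (WL 0) (WR 0) * ((Gm WL * WL 1 + Gm WR * WR 1) / 2)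
        + ((Gm WL * WL 1 + Gm WR * WR 1) / 2) * ((WL 0 + WR 0) / 2
          / ((WL 0 / WL 4 + WR 0 / WR 4) / 2))) :=
    div_mul_cancel₀ _ hDne
  have hsL : Real.log (WL 4 * WL 0 ^ (-γ))
      = -Real.log (WL 0 / WL 4) - (γ - 1) * Real.log (WL 0) := by
    rw [Real.log_mul hpL.ne' (Real.rpow_pos_of_pos hρL (-γ)).ne',
      Real.log_rpow hρL, Real.log_div hρL.ne' hpL.ne']
    ring
  have hsR : Real.log (WR 4 * WR 0 ^ (-γ))
      = -Real.log (WR 0 / WR 4) - (γ - 1) * Real.log (WR 0) := by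
    rw [Real.log_mul hpR.ne' (Real.rpow_pos_of_pos hρR (-γ)).ne',
      Real.log_rpow hρR, Real.log_div hρR.ne' hpR.ne']
    ring
  simp only [dot5, entV, Ffl, psiX, Matrix.cons_val_zero, Matrix.cons_val_one,
    Matrix.head_cons, Matrix.cons_val_two, Matrix.tail_cons, Matrix.cons_val_three,
    Matrix.cons_val_four]
  rw [hsL, hsR]
  linear_combination C0_alg γ (WL 0) (WR 0) (WL 0 / WL 4) (WR 0 / WR 4)
    (WL 1) (WL 2) (WL 3) (WR 1) (WR 2) (WR 3) (Gm WL) (Gm WR)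
    (Real.log (WL 0)) (Real.log (WR 0)) (Real.log (WL 0 / WL 4)) (Real.log (WR 0 / WR 4))
    (logMean (WL 0) (WR 0)) (logMean (WL 0 / WL 4) (WR 0 / WR 4))
    (-((Gm WL + Gm WR) / 2) * ((1 / ((γ - 1) * logMean (WL 0 / WL 4) (WR 0 / WR 4)) + 1)
        * logMean (WL 0) (WR 0) * ((Gm WL * WL 1 + Gm WR * WR 1) / 2)
        + ((Gm WL * WL 1 + Gm WR * WR 1) / 2) * ((WL 0 + WR 0) / 2
          / ((WL 0 / WL 4 + WR 0 / WR 4) / 2)))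
      / (((Gm WL * WL 1 + Gm WR * WR 1) / 2) ^ 2 + ((Gm WL * WL 2 + Gm WR * WR 2) / 2) ^ 2
        + ((Gm WL * WL 3 + Gm WR * WR 3) / 2) ^ 2 - ((Gm WL + Gm WR) / 2) ^ 2))
    (((WL 0 + WR 0) / 2) / ((WL 0 / WL 4 + WR 0 / WR 4) / 2))
    (1 / ((γ - 1) * logMean (WL 0 / WL 4) (WR 0 / WR 4)) + 1)
    hγ1 hΓL hΓR hGb hrln hbln hrbb hk hF5


lemma src_orth (γ r : ℝ) (W : Fin 5 → ℝ) (E B : Fin 3 → ℝ) :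
    dot5 (entV γ W) (src r W E B) = 0 := by
  simp only [dot5, entV, src, Matrix.cons_val_zero, Matrix.cons_val_one, Matrix.head_cons,
    Matrix.cons_val_two, Matrix.tail_cons, Matrix.cons_val_three, Matrix.cons_val_four]
  ring

lemma numEntFlux_left (γ : ℝ) (hγ : 1 < γ) (WL WR : Fin 5 → ℝ)
    (hρL : 0 < WL 0) (hpL : 0 < WL 4) (huL : WL 1 ^ 2 + WL 2 ^ 2 + WL 3 ^ 2 < 1)
    (hρR : 0 < WR 0) (hpR : 0 < WR 4) (huR : WR 1 ^ 2 + WR 2 ^ 2 + WR 3 ^ 2 < 1) :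
    numEntFlux γ WL WR = dot5 (entV γ WL) (Ffl γ WL WR) - psiX WL := by
  have h := flux_main γ hγ WL WR hρL hpL huL hρR hpR huR
  simp only [dot5] at h
  simp only [numEntFlux, dot5]
  linear_combination h / 2

lemma numEntFlux_right (γ : ℝ) (hγ : 1 < γ) (WL WR : Fin 5 → ℝ)
    (hρL : 0 < WL 0) (hpL : 0 < WL 4) (huL : WL 1 ^ 2 + WL 2 ^ 2 + WL 3 ^ 2 < 1)
    (hρR : 0 < WR 0) (hpR : 0 < WR 4) (huR : WR 1 ^ 2 + WR 2 ^ 2 + WR 3 ^ 2 < 1) :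
    numEntFlux γ WL WR = dot5 (entV γ WR) (Ffl γ WL WR) - psiX WR := by
  have h := flux_main γ hγ WL WR hρL hpL huL hρR hpR huR
  simp only [dot5] at h
  simp only [numEntFlux, dot5]
  linear_combination (-1/2 : ℝ) * h

/-- Semi-discrete entropy equality: the scheme with the entropy conservative flux is
entropy conservative, and the Lorentz-force source terms do not affect the entropy
evolution. -/
theorem semi_discrete_entropy_equality
    (γ Δx r : ℝ) (N : ℕ) [NeZero N]
    (hγ : 1 < γ) (hΔx : 0 < Δx)
    (W : ZMod N → ℝ → Fin 5 → ℝ) (E B : ZMod N → ℝ → Fin 3 → ℝ)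
    (hρ : ∀ j t, 0 < W j t 0) (hp : ∀ j t, 0 < W j t 4)
    (hu : ∀ j t, (W j t 1) ^ 2 + (W j t 2) ^ 2 + (W j t 3) ^ 2 < 1)
    (hdiff : ∀ j, Differentiable ℝ (W j))
    (hscheme : ∀ j t,
      deriv (fun τ => Umap γ (W j τ)) t =
        -((1 / Δx) • (Ffl γ (W j t) (W (j + 1) t) - Ffl γ (W (j - 1) t) (W j t)))
          + src r (W j t) (E j t) (B j t)) :
    ∀ j t,
      deriv (fun τ => entU γ (W j τ)) t
        + (numEntFlux γ (W j t) (W (j + 1) t)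
            - numEntFlux γ (W (j - 1) t) (W j t)) / Δx = 0 := by
  intro j t
  have hDer := deriv_entU_eq γ hγ (W j) (hρ j) (hp j) (hu j) (hdiff j) t
  rw [hDer, hscheme j t,
    numEntFlux_left γ hγ (W j t) (W (j + 1) t) (hρ j t) (hp j t) (hu j t)
      (hρ (j + 1) t) (hp (j + 1) t) (hu (j + 1) t),
    numEntFlux_right γ hγ (W (j - 1) t) (W j t) (hρ (j - 1) t) (hp (j - 1) t) (hu (j - 1) t)
      (hρ j t) (hp j t) (hu j t)]
  have hs := src_orth γ r (W j t) (E j t) (B j t)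
  simp only [dot5] at hs
  simp only [dot5, Pi.add_apply, Pi.neg_apply, Pi.smul_apply, Pi.sub_apply, smul_eq_mul]
  linear_combination hs
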